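/- Let d ≥ 2, k > 2, θ ≥ 0, and let b₃(x,y) = |x|^θ φ(y) with φ : [−1/2,1/2] → [0,∞) measurable and essentially bounded, and ‖b₃‖ := ∫_{S^{2d−1}} b₃(ê·ω, ω₁·ω₂) dω < ∞. Suppose λ ∈ [0, ‖b₃‖] satisfies ∫_{S^{2d−1}} b₃(û·ω, ω₁·ω₂)(⟨v*⟩^k + ⟨v₁*⟩^k + ⟨v₂*⟩^k) dω ≤ λ (⟨v⟩² + ⟨v₁⟩² + ⟨v₂⟩²)^{k/2} for all v, v₁, v₂ ∈ ℝ^d with u = (v₁−v, v₂−v) ≠ 0, where û = u/|u|. Define K(v,v₁,v₂) = ∫_{S^{2d−1}} b₃(û·ω, ω₁·ω₂)(⟨v*⟩^k + ⟨v₁*⟩^k + ⟨v₂*⟩^k − ⟨v⟩^k − ⟨v₁⟩^k − ⟨v₂⟩^k) dω. Then there exists a constant C_k > 1, depending only on k, and functions G̃, L̃ defined on triples (v,v₁,v₂) with u ≠ 0, such that K = G̃ − L̃, 0 ≤ G̃ ≤ λ C_k (⟨v⟩⟨v₁⟩ + ⟨v⟩⟨v₂⟩ + ⟨v₁⟩⟨v₂⟩)(⟨v⟩^{k−2}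 + ⟨v₁⟩^{k−2} + ⟨v₂⟩^{k−2}), and L̃ ≥ (‖b₃‖ − λ)(⟨v⟩^k + ⟨v₁⟩^k + ⟨v₂⟩^k). -/

import Mathlib

open MeasureTheory
open scoped RealInnerProductSpace

/-- The "Japanese bracket" `⟨v⟩ = √(1 + |v|²)`. -/
noncomputable def jap {d : ℕ} (v : EuclideanSpace ℝ (Fin d)) : ℝ := Real.sqrt (1 + ‖v‖ ^ 2)

/-- The pair `(x, y) ∈ ℝ^d × ℝ^d` viewed as a vector of `ℝ^{2d}` (with the Euclidean norm). -/
noncomputable def pairE {d : ℕ} (x y : EuclideanSpace ℝ (Fin d)) :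
    EuclideanSpace ℝ (Fin d ⊕ Fin d) :=
  (EuclideanSpace.equiv (Fin d ⊕ Fin d) ℝ).symm (Sum.elim (fun i => x i) (fun i => y i))

/-- First component `ω₁ ∈ ℝ^d` of a vector `ω ∈ ℝ^{2d}`. -/
noncomputable def projL {d : ℕ} (z : EuclideanSpace ℝ (Fin d ⊕ Fin d)) :
    EuclideanSpace ℝ (Fin d) :=
  (EuclideanSpace.equiv (Fin d) ℝ).symm (fun i => z (Sum.inl i))

/-- Second component `ω₂ ∈ ℝ^d` of a vector `ω ∈ ℝ^{2d}`. -/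
noncomputable def projR {d : ℕ} (z : EuclideanSpace ℝ (Fin d ⊕ Fin d)) :
    EuclideanSpace ℝ (Fin d) :=
  (EuclideanSpace.equiv (Fin d) ℝ).symm (fun i => z (Sum.inr i))

/-- Scalar coefficient `c = ((v₁−v)·ω₁ + (v₂−v)·ω₂)/(1 + ω₁·ω₂)` of the ternary collision law. -/
noncomputable def tCoef {d : ℕ} (v v₁ v₂ ω₁ ω₂ : EuclideanSpace ℝ (Fin d)) : ℝ :=
  (⟪v₁ - v, ω₁⟫ + ⟪v₂ - v, ω₂⟫) / (1 + ⟪ω₁, ω₂⟫)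

/-- `v* = v + c(ω₁+ω₂)`. -/
noncomputable def vStar {d : ℕ} (v v₁ v₂ ω₁ ω₂ : EuclideanSpace ℝ (Fin d)) :
    EuclideanSpace ℝ (Fin d) := v + tCoef v v₁ v₂ ω₁ ω₂ • (ω₁ + ω₂)

/-- `v₁* = v₁ − c ω₁`. -/
noncomputable def v1Star {d : ℕ} (v v₁ v₂ ω₁ ω₂ : EuclideanSpace ℝ (Fin d)) :
    EuclideanSpace ℝ (Fin d) := v₁ - tCoef v v₁ v₂ ω₁ ω₂ • ω₁

/-- `v₂* = v₂ − c ω₂`. -/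
noncomputable def v2Star {d : ℕ} (v v₁ v₂ ω₁ ω₂ : EuclideanSpace ℝ (Fin d)) :
    EuclideanSpace ℝ (Fin d) := v₂ - tCoef v v₁ v₂ ω₁ ω₂ • ω₂

/-- The surface measure on the unit sphere `S^{2d−1} ⊂ ℝ^{2d}`. -/
noncomputable def sphereMeasure2 (d : ℕ) :
    Measure (Metric.sphere (0 : EuclideanSpace ℝ (Fin d ⊕ Fin d)) 1) :=
  (volume : Measure (EuclideanSpace ℝ (Fin d ⊕ Fin d))).toSphere

/-!
Write `I` for the integral of `b₃ (⟨v*⟩^k + ⟨v₁*⟩^k + ⟨v₂*⟩^k)` and `S = ⟨v⟩^k + ⟨v₁⟩^k + ⟨v₂⟩^k`.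
The collision law conserves energy on the sphere, so the post-collisional moments are bounded
and `K = I - ‖b₃‖ S`. Take `G̃ = (I - λ S)⁺` and `L̃ = G̃ - K`: then `L̃ ≥ (‖b₃‖ - λ) S` at once,
while the averaging hypothesis gives `G̃ ≤ λ ((⟨v⟩² + ⟨v₁⟩² + ⟨v₂⟩²)^{k/2} - S)`. This is
bounded by the elementary Povzner inequality with `C_k = (k/2) 3^{k/2-1}`, which follows from
`(x + y)^p ≤ x^p + p y (x + y)^{p-1}` applied with `x` the largest of the three squares.
-/

open Real

section Collision

variable {d : ℕ}

lemma norm_projL_sq_add_norm_projR_sq (z : EuclideanSpace ℝ (Fin d ⊕ Fin d)) :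
    ‖projL z‖ ^ 2 + ‖projR z‖ ^ 2 = ‖z‖ ^ 2 := by
  simp only [EuclideanSpace.norm_sq_eq, projL, projR, Fintype.sum_sum_type]
  rfl

lemma one_add_inner_pos {E : Type*} [NormedAddCommGroup E] [InnerProductSpace ℝ E] {a b : E}
    (h : ‖a‖ ^ 2 + ‖b‖ ^ 2 = 1) : 0 < 1 + ⟪a, b⟫ := by
  nlinarith [norm_add_sq_real a b, sq_nonneg ‖a + b‖]

variable (v v₁ v₂ : EuclideanSpace ℝ (Fin d)) {ω₁ ω₂ : EuclideanSpace ℝ (Fin d)}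

lemma norm_sq_vStar_add_norm_sq_v1Star_add_norm_sq_v2Star (h : ‖ω₁‖ ^ 2 + ‖ω₂‖ ^ 2 = 1) :
    ‖vStar v v₁ v₂ ω₁ ω₂‖ ^ 2 + ‖v1Star v v₁ v₂ ω₁ ω₂‖ ^ 2 + ‖v2Star v v₁ v₂ ω₁ ω₂‖ ^ 2 =
      ‖v‖ ^ 2 + ‖v₁‖ ^ 2 + ‖v₂‖ ^ 2 := by
  have hc : tCoef v v₁ v₂ ω₁ ω₂ * (1 + ⟪ω₁, ω₂⟫) = ⟪v₁ - v, ω₁⟫ + ⟪v₂ - v, ω₂⟫ :=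
    div_mul_cancel₀ _ (one_add_inner_pos h).ne'
  simp only [vStar, v1Star, v2Star, norm_add_sq_real, norm_sub_sq_real, norm_smul,
    inner_smul_right, inner_add_right, inner_sub_left, mul_pow, norm_eq_abs, sq_abs] at hc ⊢
  linear_combination (2 * tCoef v v₁ v₂ ω₁ ω₂) * hc + 2 * tCoef v v₁ v₂ ω₁ ω₂ ^ 2 * h

end Collision

lemma rpow_add_le_rpow_add_mul {x y p : ℝ} (hx : 0 ≤ x) (hy : 0 ≤ y) (hp : 1 ≤ p) :
    (x + y) ^ p ≤ x ^ p + p * y * (x + y) ^ (p - 1) := by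
  rcases (add_nonneg hx hy).eq_or_lt with hxy | hxy
  · obtain rfl : x = 0 := by linarith
    obtain rfl : y = 0 := by linarith
    simp
  · have hs : -1 ≤ -y / (x + y) := by rw [le_div_iff₀ hxy]; linarith
    have h := one_add_mul_self_le_rpow_one_add hs hp
    rw [show 1 + -y / (x + y) = x / (x + y) by field_simp; ring, div_rpow hx hxy.le,
      le_div_iff₀ (by positivity)] at h
    rw [rpow_sub_one hxy.ne']
    field_simp at h ⊢
    linarith

lemma rpow_le_rpow_half_of_sq_le {x s k : ℝ} (hx : 0 ≤ x) (hk : 0 ≤ k) (h : x ^ 2 ≤ s) :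
    x ^ k ≤ s ^ (k / 2) := by
  calc x ^ k = (x ^ 2) ^ (k / 2) := by rw [← rpow_natCast_mul hx]; ring_nf
    _ ≤ s ^ (k / 2) := rpow_le_rpow (sq_nonneg x) h (by linarith)

noncomputable def povznerConst (k : ℝ) : ℝ := k / 2 * 3 ^ (k / 2 - 1)

lemma one_lt_povznerConst {k : ℝ} (hk : 2 < k) : 1 < povznerConst k := by
  have : 1 ≤ (3 : ℝ) ^ (k / 2 - 1) := one_le_rpow (by norm_num) (by linarith)
  unfold povznerConst
  nlinarith

lemma sq_add_sq_add_sq_rpow_le_of_le {a b c k : ℝ} (hk : 2 ≤ k) (hb : 0 ≤ b) (hc : 0 ≤ c)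
    (hba : b ≤ a) (hca : c ≤ a) :
    (a ^ 2 + b ^ 2 + c ^ 2) ^ (k / 2) ≤ a ^ k + b ^ k + c ^ k +
      povznerConst k * (a * b + a * c + b * c) * (a ^ (k - 2) + b ^ (k - 2) + c ^ (k - 2)) := by
  have ha : 0 ≤ a := hb.trans hba
  have hbc : b ^ 2 + c ^ 2 ≤ a * b + a * c + b * c := by nlinarith
  have hmean := rpow_add_le_rpow_add_mul (sq_nonneg a) (add_nonneg (sq_nonneg b) (sq_nonneg c))
    (show 1 ≤ k / 2 by linarith)
  have hpow : (a ^ 2 + b ^ 2 + c ^ 2) ^ (k / 2 - 1) ≤ 3 ^ (k / 2 - 1) * a ^ (k - 2) :=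
    calc (a ^ 2 + b ^ 2 + c ^ 2) ^ (k / 2 - 1) ≤ (3 * a ^ 2) ^ (k / 2 - 1) :=
          rpow_le_rpow (by positivity) (by nlinarith) (by linarith)
      _ = 3 ^ (k / 2 - 1) * a ^ (k - 2) := by
          rw [mul_rpow (by norm_num) (sq_nonneg a), ← rpow_natCast_mul ha]; ring_nf
  rw [← rpow_natCast_mul ha, Nat.cast_ofNat, mul_div_cancel₀ k two_ne_zero, ← add_assoc] at hmean
  have hrest : 0 ≤ b ^ k + c ^ k +
      povznerConst k * (a * b + a * c + b * c) * (b ^ (k - 2) + c ^ (k - 2)) := by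
    unfold povznerConst; positivity
  calc (a ^ 2 + b ^ 2 + c ^ 2) ^ (k / 2)
      ≤ a ^ k + k / 2 * (b ^ 2 + c ^ 2) * (a ^ 2 + b ^ 2 + c ^ 2) ^ (k / 2 - 1) := hmean
    _ ≤ a ^ k + k / 2 * (a * b + a * c + b * c) * (3 ^ (k / 2 - 1) * a ^ (k - 2)) := by
        gcongr
    _ ≤ _ := by
        unfold povznerConst at hrest ⊢
        linarith

lemma sq_add_sq_add_sq_rpow_le {a b c k : ℝ} (hk : 2 ≤ k) (ha : 0 ≤ a) (hb : 0 ≤ b)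
    (hc : 0 ≤ c) :
    (a ^ 2 + b ^ 2 + c ^ 2) ^ (k / 2) ≤ a ^ k + b ^ k + c ^ k +
      povznerConst k * (a * b + a * c + b * c) * (a ^ (k - 2) + b ^ (k - 2) + c ^ (k - 2)) := by
  rcases le_total b a with hba | hab <;> rcases le_total c a with hca | hac
  · exact sq_add_sq_add_sq_rpow_le_of_le hk hb hc hba hca
  · have h := sq_add_sq_add_sq_rpow_le_of_le hk ha hb hac (hba.trans hac)
    rw [show a ^ 2 + b ^ 2 + c ^ 2 = c ^ 2 + a ^ 2 + b ^ 2 by ring]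
    linarith
  · have h := sq_add_sq_add_sq_rpow_le_of_le hk ha hc hab (hca.trans hab)
    rw [show a ^ 2 + b ^ 2 + c ^ 2 = b ^ 2 + a ^ 2 + c ^ 2 by ring]
    linarith
  · rcases le_total c b with hcb | hbc
    · have h := sq_add_sq_add_sq_rpow_le_of_le hk ha hc hab hcb
      rw [show a ^ 2 + b ^ 2 + c ^ 2 = b ^ 2 + a ^ 2 + c ^ 2 by ring]
      linarith
    · have h := sq_add_sq_add_sq_rpow_le_of_le hk ha hb hac hbc
      rw [show a ^ 2 + b ^ 2 + c ^ 2 = c ^ 2 + a ^ 2 + b ^ 2 by ring]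
      linarith

lemma integral_mul_sub_const_of_bounded {Ω : Type*} [MeasurableSpace Ω] {μ : Measure Ω}
    {f g : Ω → ℝ} {M : ℝ} (hf : Integrable f μ) (hg : AEStronglyMeasurable g μ)
    (hM : ∀ᵐ ω ∂μ, ‖g ω‖ ≤ M) (c : ℝ) :
    ∫ ω, f ω * (g ω - c) ∂μ = ∫ ω, f ω * g ω ∂μ - (∫ ω, f ω ∂μ) * c := by
  simp_rw [mul_sub]
  rw [integral_sub (hf.mul_bdd hg hM) (hf.mul_const c), integral_mul_const]

section GainLoss

variable {d : ℕ}

lemma jap_sq (v : EuclideanSpace ℝ (Fin d)) : jap v ^ 2 = 1 + ‖v‖ ^ 2 :=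
  sq_sqrt (by positivity)

lemma jap_nonneg (v : EuclideanSpace ℝ (Fin d)) : 0 ≤ jap v := sqrt_nonneg _

variable (b₃ : ℝ → ℝ → ℝ) (k : ℝ)

noncomputable def collisionWeight (u ω : EuclideanSpace ℝ (Fin d ⊕ Fin d)) : ℝ :=
  b₃ ⟪‖u‖⁻¹ • u, ω⟫ ⟪projL ω, projR ω⟫

noncomputable def postMoment (v v₁ v₂ : EuclideanSpace ℝ (Fin d))
    (ω : EuclideanSpace ℝ (Fin d ⊕ Fin d)) : ℝ :=
  jap (vStar v v₁ v₂ (projL ω) (projR ω)) ^ k + jap (v1Star v v₁ v₂ (projL ω) (projR ω)) ^ k +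
    jap (v2Star v v₁ v₂ (projL ω) (projR ω)) ^ k

noncomputable def gainTerm (v v₁ v₂ : EuclideanSpace ℝ (Fin d)) : ℝ :=
  ∫ ω : Metric.sphere (0 : EuclideanSpace ℝ (Fin d ⊕ Fin d)) 1,
    collisionWeight b₃ (pairE (v₁ - v) (v₂ - v)) ω * postMoment k v v₁ v₂ ω ∂sphereMeasure2 d

noncomputable def momentChange (v v₁ v₂ : EuclideanSpace ℝ (Fin d)) : ℝ :=
  ∫ ω : Metric.sphere (0 : EuclideanSpace ℝ (Fin d ⊕ Fin d)) 1,
    collisionWeight b₃ (pairE (v₁ - v) (v₂ - v)) ω *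
      (postMoment k v v₁ v₂ ω - jap v ^ k - jap v₁ ^ k - jap v₂ ^ k) ∂sphereMeasure2 d

noncomputable def modifiedGain (lam : ℝ) (v v₁ v₂ : EuclideanSpace ℝ (Fin d)) : ℝ :=
  max 0 (gainTerm b₃ k v v₁ v₂ - lam * (jap v ^ k + jap v₁ ^ k + jap v₂ ^ k))

noncomputable def modifiedLoss (lam : ℝ) (v v₁ v₂ : EuclideanSpace ℝ (Fin d)) : ℝ :=
  modifiedGain b₃ k lam v v₁ v₂ - momentChange b₃ k v v₁ v₂

variable {k} (v v₁ v₂ : EuclideanSpace ℝ (Fin d))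

lemma measurable_postMoment : Measurable (postMoment k v v₁ v₂) := by
  unfold postMoment jap vStar v1Star v2Star tCoef projL projR
  fun_prop

lemma abs_postMoment_le (hk : 0 ≤ k) {ω : EuclideanSpace ℝ (Fin d ⊕ Fin d)} (hω : ‖ω‖ = 1) :
    |postMoment k v v₁ v₂ ω| ≤ 3 * (jap v ^ 2 + jap v₁ ^ 2 + jap v₂ ^ 2) ^ (k / 2) := by
  have henergy := norm_sq_vStar_add_norm_sq_v1Star_add_norm_sq_v2Star v v₁ v₂
    (by rw [norm_projL_sq_add_norm_projR_sq, hω, one_pow])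
  have hbound : ∀ w : EuclideanSpace ℝ (Fin d), ‖w‖ ^ 2 ≤ ‖v‖ ^ 2 + ‖v₁‖ ^ 2 + ‖v₂‖ ^ 2 →
      jap w ^ k ≤ (jap v ^ 2 + jap v₁ ^ 2 + jap v₂ ^ 2) ^ (k / 2) := fun w hw =>
    rpow_le_rpow_half_of_sq_le (jap_nonneg w) hk (by simp only [jap_sq]; linarith)
  rw [abs_of_nonneg (by unfold postMoment jap; positivity), postMoment]
  linarith [hbound (vStar v v₁ v₂ (projL ω) (projR ω)) (by nlinarith),
    hbound (v1Star v v₁ v₂ (projL ω) (projR ω)) (by nlinarith),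
    hbound (v2Star v v₁ v₂ (projL ω) (projR ω)) (by nlinarith)]

lemma momentChange_eq (hk : 0 ≤ k)
    (hint : Integrable (fun ω : Metric.sphere (0 : EuclideanSpace ℝ (Fin d ⊕ Fin d)) 1 =>
      collisionWeight b₃ (pairE (v₁ - v) (v₂ - v)) ω) (sphereMeasure2 d)) :
    momentChange b₃ k v v₁ v₂ = gainTerm b₃ k v v₁ v₂ -
      (∫ ω : Metric.sphere (0 : EuclideanSpace ℝ (Fin d ⊕ Fin d)) 1,
        collisionWeight b₃ (pairE (v₁ - v) (v₂ - v)) ω ∂sphereMeasure2 d) *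
        (jap v ^ k + jap v₁ ^ k + jap v₂ ^ k) := by
  have h := integral_mul_sub_const_of_bounded hint
    ((measurable_postMoment v v₁ v₂).comp measurable_subtype_coe).aestronglyMeasurable
    (Filter.Eventually.of_forall fun ω => abs_postMoment_le v v₁ v₂ hk (norm_eq_of_mem_sphere ω))
    (jap v ^ k + jap v₁ ^ k + jap v₂ ^ k)
  simp only [sub_add_eq_sub_sub, Function.comp_apply] at h
  exact h

lemma modifiedGain_le (hk : 2 ≤ k) {lam : ℝ} (hlam : 0 ≤ lam)
    (hpov : gainTerm b₃ k v v₁ v₂ ≤ lam * (jap v ^ 2 + jap v₁ ^ 2 + jap v₂ ^ 2) ^ (k / 2)) :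
    modifiedGain b₃ k lam v v₁ v₂ ≤ lam * povznerConst k *
      (jap v * jap v₁ + jap v * jap v₂ + jap v₁ * jap v₂) *
      (jap v ^ (k - 2) + jap v₁ ^ (k - 2) + jap v₂ ^ (k - 2)) := by
  have hpovzner := mul_le_mul_of_nonneg_left
    (sq_add_sq_add_sq_rpow_le hk (jap_nonneg v) (jap_nonneg v₁) (jap_nonneg v₂)) hlam
  refine max_le (by unfold povznerConst jap; positivity) ?_
  linarith

lemma le_modifiedLoss (hk : 0 ≤ k) {lam N : ℝ}
    (hint : Integrable (fun ω : Metric.sphere (0 : EuclideanSpace ℝ (Fin d ⊕ Fin d)) 1 =>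
      collisionWeight b₃ (pairE (v₁ - v) (v₂ - v)) ω) (sphereMeasure2 d))
    (hN : ∫ ω : Metric.sphere (0 : EuclideanSpace ℝ (Fin d ⊕ Fin d)) 1,
      collisionWeight b₃ (pairE (v₁ - v) (v₂ - v)) ω ∂sphereMeasure2 d = N) :
    (N - lam) * (jap v ^ k + jap v₁ ^ k + jap v₂ ^ k) ≤ modifiedLoss b₃ k lam v v₁ v₂ := by
  rw [modifiedLoss, modifiedGain, momentChange_eq b₃ v v₁ v₂ hk hint, hN]
  linarith [le_max_right 0 (gainTerm b₃ k v v₁ v₂ - lam * (jap v ^ k + jap v₁ ^ k + jap v₂ ^ k))]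

end GainLoss

/-- modified ternary gain/loss decomposition: for any `k > 2` there is a constant
`C_k > 1`, depending only on `k`, such that whenever `d ≥ 2`, `θ ≥ 0`,
`b₃(x,y) = |x|^θ φ(y)` with `φ ≥ 0` essentially bounded and finite cutoff `‖b₃‖`, and
`λ ∈ [0, ‖b₃‖]` satisfies the ternary Povzner-type averaging bound of order `k`, the quantity
`K(v,v₁,v₂) = ∫_{S^{2d−1}} b₃(û·ω, ω₁·ω₂)(⟨v*⟩^k + ⟨v₁*⟩^k + ⟨v₂*⟩^k − ⟨v⟩^k − ⟨v₁⟩^k − ⟨v₂⟩^k) dω`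
decomposes as `K = G̃ − L̃` with
`0 ≤ G̃ ≤ λ C_k (⟨v⟩⟨v₁⟩ + ⟨v⟩⟨v₂⟩ + ⟨v₁⟩⟨v₂⟩)(⟨v⟩^{k−2} + ⟨v₁⟩^{k−2} + ⟨v₂⟩^{k−2})` and
`L̃ ≥ (‖b₃‖ − λ)(⟨v⟩^k + ⟨v₁⟩^k + ⟨v₂⟩^k)` for all triples with `u = (v₁−v, v₂−v) ≠ 0`,
where `û = u/|u|`. -/
theorem ternary_modified_decomposition (k : ℝ) (hk : 2 < k) :
    ∃ Ck : ℝ, 1 < Ck ∧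
      ∀ (d : ℕ), 2 ≤ d →
      ∀ θ : ℝ, 0 ≤ θ →
      ∀ φ : ℝ → ℝ, Measurable φ →
        (∀ y ∈ Set.Icc (-(1 : ℝ) / 2) (1 / 2), 0 ≤ φ y) →
        MemLp φ ⊤ (volume.restrict (Set.Icc (-(1 : ℝ) / 2) (1 / 2))) →
      ∀ b₃ : ℝ → ℝ → ℝ, (∀ x y, b₃ x y = |x| ^ θ * φ y) →
      ∀ normb₃ : ℝ,
        (∀ e : EuclideanSpace ℝ (Fin d ⊕ Fin d), ‖e‖ = 1 →
          (∫ ω : Metric.sphere (0 : EuclideanSpace ℝ (Fin d ⊕ Fin d)) 1,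
              b₃ ⟪e, (ω : EuclideanSpace ℝ (Fin d ⊕ Fin d))⟫
                ⟪projL (ω : EuclideanSpace ℝ (Fin d ⊕ Fin d)),
                  projR (ω : EuclideanSpace ℝ (Fin d ⊕ Fin d))⟫ ∂(sphereMeasure2 d)) = normb₃) →
        (∀ e : EuclideanSpace ℝ (Fin d ⊕ Fin d), ‖e‖ = 1 →
          Integrable (fun ω : Metric.sphere (0 : EuclideanSpace ℝ (Fin d ⊕ Fin d)) 1 =>
            b₃ ⟪e, (ω : EuclideanSpace ℝ (Fin d ⊕ Fin d))⟫
              ⟪projL (ω : EuclideanSpace ℝ (Fin d ⊕ Fin d)),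
                projR (ω : EuclideanSpace ℝ (Fin d ⊕ Fin d))⟫) (sphereMeasure2 d)) →
      ∀ lam : ℝ, lam ∈ Set.Icc 0 normb₃ →
        (∀ v v₁ v₂ : EuclideanSpace ℝ (Fin d), pairE (v₁ - v) (v₂ - v) ≠ 0 →
          (∫ ω : Metric.sphere (0 : EuclideanSpace ℝ (Fin d ⊕ Fin d)) 1,
              b₃ ⟪‖pairE (v₁ - v) (v₂ - v)‖⁻¹ • pairE (v₁ - v) (v₂ - v),
                  (ω : EuclideanSpace ℝ (Fin d ⊕ Fin d))⟫
                ⟪projL (ω : EuclideanSpace ℝ (Fin d ⊕ Fin d)),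
                  projR (ω : EuclideanSpace ℝ (Fin d ⊕ Fin d))⟫ *
                (jap (vStar v v₁ v₂ (projL (ω : EuclideanSpace ℝ (Fin d ⊕ Fin d)))
                    (projR (ω : EuclideanSpace ℝ (Fin d ⊕ Fin d)))) ^ k +
                  jap (v1Star v v₁ v₂ (projL (ω : EuclideanSpace ℝ (Fin d ⊕ Fin d)))
                    (projR (ω : EuclideanSpace ℝ (Fin d ⊕ Fin d)))) ^ k +
                  jap (v2Star v v₁ v₂ (projL (ω : EuclideanSpace ℝ (Fin d ⊕ Fin d)))
                    (projR (ω : EuclideanSpace ℝ (Fin d ⊕ Fin d)))) ^ k)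
            ∂(sphereMeasure2 d)) ≤
            lam * (jap v ^ 2 + jap v₁ ^ 2 + jap v₂ ^ 2) ^ (k / 2)) →
      ∃ G L : EuclideanSpace ℝ (Fin d) → EuclideanSpace ℝ (Fin d) →
          EuclideanSpace ℝ (Fin d) → ℝ,
        ∀ v v₁ v₂ : EuclideanSpace ℝ (Fin d), pairE (v₁ - v) (v₂ - v) ≠ 0 →
          ((∫ ω : Metric.sphere (0 : EuclideanSpace ℝ (Fin d ⊕ Fin d)) 1,
              b₃ ⟪‖pairE (v₁ - v) (v₂ - v)‖⁻¹ • pairE (v₁ - v) (v₂ - v),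
                  (ω : EuclideanSpace ℝ (Fin d ⊕ Fin d))⟫
                ⟪projL (ω : EuclideanSpace ℝ (Fin d ⊕ Fin d)),
                  projR (ω : EuclideanSpace ℝ (Fin d ⊕ Fin d))⟫ *
                (jap (vStar v v₁ v₂ (projL (ω : EuclideanSpace ℝ (Fin d ⊕ Fin d)))
                    (projR (ω : EuclideanSpace ℝ (Fin d ⊕ Fin d)))) ^ k +
                  jap (v1Star v v₁ v₂ (projL (ω : EuclideanSpace ℝ (Fin d ⊕ Fin d)))
                    (projR (ω : EuclideanSpace ℝ (Fin d ⊕ Fin d)))) ^ k +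
                  jap (v2Star v v₁ v₂ (projL (ω : EuclideanSpace ℝ (Fin d ⊕ Fin d)))
                    (projR (ω : EuclideanSpace ℝ (Fin d ⊕ Fin d)))) ^ k -
                  jap v ^ k - jap v₁ ^ k - jap v₂ ^ k)
            ∂(sphereMeasure2 d)) = G v v₁ v₂ - L v v₁ v₂) ∧
          0 ≤ G v v₁ v₂ ∧
          G v v₁ v₂ ≤ lam * Ck * (jap v * jap v₁ + jap v * jap v₂ + jap v₁ * jap v₂) *
            (jap v ^ (k - 2) + jap v₁ ^ (k - 2) + jap v₂ ^ (k - 2)) ∧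
          (normb₃ - lam) * (jap v ^ k + jap v₁ ^ k + jap v₂ ^ k) ≤ L v v₁ v₂ := by
  refine ⟨povznerConst k, one_lt_povznerConst hk, ?_⟩
  intro d _ θ _ φ _ _ _ b₃ _ normb₃ hnorm hint lam hlam hpov
  refine ⟨modifiedGain b₃ k lam, modifiedLoss b₃ k lam, fun v v₁ v₂ hu => ?_⟩
  have he : ‖‖pairE (v₁ - v) (v₂ - v)‖⁻¹ • pairE (v₁ - v) (v₂ - v)‖ = 1 :=
    norm_smul_inv_norm hu
  exact ⟨(sub_sub_cancel _ _).symm, le_max_left _ _,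
    modifiedGain_le b₃ v v₁ v₂ hk.le hlam.1 (hpov v v₁ v₂ hu),
    le_modifiedLoss b₃ v v₁ v₂ (by linarith) (hint _ he) (hnorm _ he)⟩
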